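/- In the non-compliance SCM, the individual prescription effect factorizes as the product of the individual treatment effect and the individual compliance: IPE(x) = ITE(x)·γ(x), where IPE(x) = P(Y=1 | do(P:=1), X=x) − P(Y=1 | do(P:=0), X=x), ITE(x) = P(Y=1 | do(T:=1), X=x) − P(Y=1 | do(T:=0), X=x), and γ(x) = P(T=1 | do(P:=1), X=x). -/

import Mathlib

open Classical Finset

/-- Probability of an event in a finite probability space given by a mass function. -/
noncomputable def Pr {Ω : Type*} [Fintype Ω] (pr : Ω → ℝ) (A : Ω → Prop) : ℝ :=
  ∑ ω, if A ω then pr ω else 0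

/-- Conditional probability `P(A | B)`. -/
noncomputable def cPr {Ω : Type*} [Fintype Ω] (pr : Ω → ℝ) (A B : Ω → Prop) : ℝ :=
  Pr pr (fun ω => A ω ∧ B ω) / Pr pr B

/-! The proposition rests on one independence fact: the compliance noise `N_T` is independent of
`(U, N_X, N_Y)`, hence of `(X, U, N_Y)`. Given `X = x`, the prescribed outcome is
`f_Y(x, f_T(x, N_T), U, N_Y)`, and conditioning on the value of `f_T(x, N_T)` gives
`P(Y = 1 | do(P := 1), x) = γ a₁ + (1 - γ) a₀`, where `a_b = P(Y = 1 | do(T := b), x)`; since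
`P(Y = 1 | do(P := 0), x) = a₀`, the difference is `γ (a₁ - a₀)`. -/

section Pr

variable {Ω : Type*} [Fintype Ω] (pr : Ω → ℝ)

theorem Pr_congr {A B : Ω → Prop} (h : ∀ ω, A ω ↔ B ω) : Pr pr A = Pr pr B := by
  simp only [Pr, h]

theorem Pr_and_congr_left {A B E : Ω → Prop} (h : ∀ ω, E ω → (A ω ↔ B ω)) :
    Pr pr (fun ω => A ω ∧ E ω) = Pr pr (fun ω => B ω ∧ E ω) :=
  Pr_congr pr fun ω => ⟨fun ⟨ha, he⟩ => ⟨(h ω he).1 ha, he⟩, fun ⟨hb, he⟩ => ⟨(h ω he).2 hb, he⟩⟩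

theorem Pr_eq_sum_Pr_eq_and {β : Type*} (g : Ω → β) (E : Ω → Prop) :
    Pr pr E = ∑ b ∈ univ.image g, Pr pr (fun ω => g ω = b ∧ E ω) := by
  unfold Pr
  rw [Finset.sum_comm]
  refine Finset.sum_congr rfl fun ω _ => ?_
  by_cases hE : E ω <;> simp [hE]

theorem Pr_comp_and_eq_sum {β : Type*} (g : Ω → β) (B : β → Prop) (E : Ω → Prop) :
    Pr pr (fun ω => B (g ω) ∧ E ω)
      = ∑ b ∈ univ.image g, if B b then Pr pr (fun ω => g ω = b ∧ E ω) else 0 := by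
  rw [Pr_eq_sum_Pr_eq_and pr g]
  refine Finset.sum_congr rfl fun b _ => ?_
  split_ifs with hb
  · exact Pr_congr pr fun ω => ⟨fun ⟨hg, _, he⟩ => ⟨hg, he⟩, fun ⟨hg, he⟩ => ⟨hg, hg ▸ hb, he⟩⟩
  · refine Finset.sum_eq_zero fun ω _ => if_neg ?_
    rintro ⟨rfl, hB, _⟩
    exact hb hB

variable {pr}

theorem Pr_true (hsum : ∑ ω, pr ω = 1) : Pr pr (fun _ => True) = 1 := by
  simpa [Pr] using hsum

theorem sum_Pr_eq {β : Type*} (hsum : ∑ ω, pr ω = 1) (g : Ω → β) :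
    ∑ b ∈ univ.image g, Pr pr (fun ω => g ω = b) = 1 := by
  simpa only [and_true, Pr_true hsum] using (Pr_eq_sum_Pr_eq_and pr g fun _ => True).symm

theorem Pr_eq_of_forall_Pr_eq_and_eq_mul {β : Type*} (hsum : ∑ ω, pr ω = 1) (g : Ω → β)
    {E : Ω → Prop} {c : ℝ} (h : ∀ b, Pr pr (fun ω => g ω = b ∧ E ω) = Pr pr (fun ω => g ω = b) * c) :
    Pr pr E = c := by
  rw [Pr_eq_sum_Pr_eq_and pr g, Finset.sum_congr rfl fun b _ => h b, ← Finset.sum_mul,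
    sum_Pr_eq hsum, one_mul]

theorem Pr_eq_false_eq_one_sub (hsum : ∑ ω, pr ω = 1) (t : Ω → Bool) :
    Pr pr (fun ω => t ω = false) = 1 - Pr pr (fun ω => t ω = true) := by
  unfold Pr
  rw [← hsum, ← Finset.sum_sub_distrib]
  refine Finset.sum_congr rfl fun ω _ => ?_
  cases ht : t ω <;> simp [ht]

theorem Pr_bool_eq_add (t : Ω → Bool) (B : Bool → Ω → Prop) :
    Pr pr (fun ω => B (t ω) ω)
      = Pr pr (fun ω => t ω = true ∧ B true ω) + Pr pr (fun ω => t ω = false ∧ B false ω) := by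
  unfold Pr
  rw [← Finset.sum_add_distrib]
  refine Finset.sum_congr rfl fun ω _ => ?_
  cases ht : t ω <;> simp [ht]

theorem Pr_comp_and_eq_mul_of_forall {β : Type*} {g : Ω → β} {E : Ω → Prop}
    (h : ∀ b, Pr pr (fun ω => g ω = b ∧ E ω) = Pr pr (fun ω => g ω = b) * Pr pr E) (B : β → Prop) :
    Pr pr (fun ω => B (g ω) ∧ E ω) = Pr pr (fun ω => B (g ω)) * Pr pr E := by
  have hB : Pr pr (fun ω => B (g ω))
      = ∑ b ∈ univ.image g, if B b then Pr pr (fun ω => g ω = b) else 0 := by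
    simpa only [and_true] using Pr_comp_and_eq_sum pr g B fun _ => True
  rw [Pr_comp_and_eq_sum, hB, Finset.sum_mul]
  refine Finset.sum_congr rfl fun b _ => ?_
  split_ifs
  · exact h b
  · exact (zero_mul _).symm

variable (pr) in
def IndepPr {α β : Type*} (f : Ω → α) (g : Ω → β) : Prop :=
  ∀ (A : α → Prop) (B : β → Prop),
    Pr pr (fun ω => A (f ω) ∧ B (g ω)) = Pr pr (fun ω => A (f ω)) * Pr pr (fun ω => B (g ω))

theorem IndepPr.of_forall_Pr_eq_and_eq {α β : Type*} {f : Ω → α} {g : Ω → β}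
    (h : ∀ a b, Pr pr (fun ω => f ω = a ∧ g ω = b)
      = Pr pr (fun ω => f ω = a) * Pr pr (fun ω => g ω = b)) :
    IndepPr pr f g := by
  intro A B
  have hfiber : ∀ a, Pr pr (fun ω => f ω = a ∧ B (g ω))
      = Pr pr (fun ω => f ω = a) * Pr pr (fun ω => B (g ω)) := fun a => by
    have hg : ∀ b, Pr pr (fun ω => g ω = b ∧ f ω = a)
        = Pr pr (fun ω => g ω = b) * Pr pr (fun ω => f ω = a) := fun b => by
      rw [Pr_congr pr fun ω => and_comm, h, mul_comm]
    rw [Pr_congr pr fun ω => and_comm, Pr_comp_and_eq_mul_of_forall hg, mul_comm]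
  exact Pr_comp_and_eq_mul_of_forall hfiber A

theorem IndepPr.comp {α β γ δ : Type*} {f : Ω → α} {g : Ω → β} (h : IndepPr pr f g)
    (φ : α → γ) (ψ : β → δ) : IndepPr pr (fun ω => φ (f ω)) (fun ω => ψ (g ω)) :=
  fun A B => h (fun a => A (φ a)) (fun b => B (ψ b))

theorem IndepPr.Pr_bool_eq_add {β : Type*} {t : Ω → Bool} {g : Ω → β} (h : IndepPr pr t g)
    (B : Bool → β → Prop) :
    Pr pr (fun ω => B (t ω) (g ω))
      = Pr pr (fun ω => t ω = true) * Pr pr (fun ω => B true (g ω))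
        + Pr pr (fun ω => t ω = false) * Pr pr (fun ω => B false (g ω)) := by
  rw [_root_.Pr_bool_eq_add t fun b ω => B b (g ω), h (· = true), h (· = false)]

end Pr

theorem indepPr_of_noise_factorization {Ω 𝒰 NXt NTt NYt : Type*} [Fintype Ω]
    {pr : Ω → ℝ} (hsum : ∑ ω, pr ω = 1)
    {NP : Ω → Bool} {NU : Ω → 𝒰} {NXn : Ω → NXt} {NTn : Ω → NTt} {NYn : Ω → NYt}
    (hindep : ∀ (a : Bool) (u : 𝒰) (nx : NXt) (nt : NTt) (ny : NYt),
      Pr pr (fun ω => NP ω = a ∧ NU ω = u ∧ NXn ω = nx ∧ NTn ω = nt ∧ NYn ω = ny)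
        = Pr pr (fun ω => NP ω = a) * Pr pr (fun ω => NU ω = u)
          * Pr pr (fun ω => NXn ω = nx) * Pr pr (fun ω => NTn ω = nt)
          * Pr pr (fun ω => NYn ω = ny)) :
    IndepPr pr NTn (fun ω => (NU ω, NXn ω, NYn ω)) := by
  have hUXTY : ∀ u nx nt ny, Pr pr (fun ω => NU ω = u ∧ NXn ω = nx ∧ NTn ω = nt ∧ NYn ω = ny)
      = Pr pr (fun ω => NU ω = u) * Pr pr (fun ω => NXn ω = nx)
        * Pr pr (fun ω => NTn ω = nt) * Pr pr (fun ω => NYn ω = ny) := fun u nx nt ny =>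
    Pr_eq_of_forall_Pr_eq_and_eq_mul hsum NP fun a => by rw [hindep]; ring
  have hUXY : ∀ u nx ny, Pr pr (fun ω => NU ω = u ∧ NXn ω = nx ∧ NYn ω = ny)
      = Pr pr (fun ω => NU ω = u) * Pr pr (fun ω => NXn ω = nx)
        * Pr pr (fun ω => NYn ω = ny) := fun u nx ny =>
    Pr_eq_of_forall_Pr_eq_and_eq_mul hsum NTn fun nt => by
      rw [Pr_congr pr (B := fun ω => NU ω = u ∧ NXn ω = nx ∧ NTn ω = nt ∧ NYn ω = ny)
        fun ω => by tauto, hUXTY]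
      ring
  refine IndepPr.of_forall_Pr_eq_and_eq fun nt ⟨u, nx, ny⟩ => ?_
  simp only [Prod.mk.injEq]
  rw [Pr_congr pr (B := fun ω => NU ω = u ∧ NXn ω = nx ∧ NTn ω = nt ∧ NYn ω = ny)
    fun ω => by tauto, hUXTY, hUXY]
  ring

theorem stmt5_general
    {Ω 𝒰 𝒳 NXt NTt NYt : Type*} [Fintype Ω]
    (pr : Ω → ℝ) (hsum : ∑ ω, pr ω = 1)
    (NP : Ω → Bool) (NU : Ω → 𝒰) (NXn : Ω → NXt) (NTn : Ω → NTt) (NYn : Ω → NYt)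
    (fX : 𝒰 → NXt → 𝒳) (fT : 𝒳 → NTt → Bool) (fY : 𝒳 → Bool → 𝒰 → NYt → Bool)
    (U : Ω → 𝒰) (hU : U = NU)
    (X : Ω → 𝒳) (hX : X = fun ω => fX (U ω) (NXn ω))
    (hindep : ∀ (a : Bool) (u : 𝒰) (nx : NXt) (nt : NTt) (ny : NYt),
      Pr pr (fun ω => NP ω = a ∧ NU ω = u ∧ NXn ω = nx ∧ NTn ω = nt ∧ NYn ω = ny)
        = Pr pr (fun ω => NP ω = a) * Pr pr (fun ω => NU ω = u)
          * Pr pr (fun ω => NXn ω = nx) * Pr pr (fun ω => NTn ω = nt)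
          * Pr pr (fun ω => NYn ω = ny))
    (x : 𝒳)
    (hx : 0 < Pr pr (fun ω => X ω = x)) :
    -- IPE(x)
    cPr pr (fun ω => fY (X ω) (fT (X ω) (NTn ω) && true) (U ω) (NYn ω) = true)
        (fun ω => X ω = x)
      - cPr pr (fun ω => fY (X ω) (fT (X ω) (NTn ω) && false) (U ω) (NYn ω) = true)
          (fun ω => X ω = x)
      = -- ITE(x)
        (cPr pr (fun ω => fY (X ω) true (U ω) (NYn ω) = true) (fun ω => X ω = x)
          - cPr pr (fun ω => fY (X ω) false (U ω) (NYn ω) = true) (fun ω => X ω = x))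
        * -- γ(x)
        cPr pr (fun ω => (fT (X ω) (NTn ω) && true) = true) (fun ω => X ω = x) := by
  have hind : IndepPr pr (fun ω => fT x (NTn ω)) (fun ω => (X ω, U ω, NYn ω)) := by
    subst hU hX
    exact (indepPr_of_noise_factorization hsum hindep).comp (fT x)
      fun v => (fX v.1 v.2.1, v.1, v.2.2)
  have hITE : ∀ b, Pr pr (fun ω => fY (X ω) b (U ω) (NYn ω) = true ∧ X ω = x)
      = Pr pr (fun ω => fY x b (U ω) (NYn ω) = true ∧ X ω = x) := fun b =>
    Pr_and_congr_left pr fun ω hω => by rw [hω]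
  have hIPE : Pr pr (fun ω => fY (X ω) (fT (X ω) (NTn ω)) (U ω) (NYn ω) = true ∧ X ω = x)
      = Pr pr (fun ω => fT x (NTn ω) = true)
          * Pr pr (fun ω => fY x true (U ω) (NYn ω) = true ∧ X ω = x)
        + Pr pr (fun ω => fT x (NTn ω) = false)
          * Pr pr (fun ω => fY x false (U ω) (NYn ω) = true ∧ X ω = x) :=
    (Pr_and_congr_left pr fun ω hω => by rw [hω]).trans
      (hind.Pr_bool_eq_add fun b v => fY x b v.2.1 v.2.2 = true ∧ v.1 = x)
  have hγ : Pr pr (fun ω => fT (X ω) (NTn ω) = true ∧ X ω = x)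
      = Pr pr (fun ω => fT x (NTn ω) = true) * Pr pr (fun ω => X ω = x) :=
    (Pr_and_congr_left pr fun ω hω => by rw [hω]).trans (hind (· = true) (·.1 = x))
  simp only [cPr, Bool.and_true, Bool.and_false, hITE]
  rw [hIPE, hγ, Pr_eq_false_eq_one_sub hsum]
  field_simp
  ring

/-- Proposition 2: In the non-compliance SCM, IPE(x) = ITE(x)·γ(x), where
IPE(x) = P(Y=1 | do(P:=1), X=x) − P(Y=1 | do(P:=0), X=x),
ITE(x) = P(Y=1 | do(T:=1), X=x) − P(Y=1 | do(T:=0), X=x), and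
γ(x) = P(T=1 | do(P:=1), X=x). -/
theorem stmt5
    {Ω 𝒰 𝒳 NXt NTt NYt : Type*} [Fintype Ω]
    (pr : Ω → ℝ) (hpr : ∀ ω, 0 ≤ pr ω) (hsum : ∑ ω, pr ω = 1)
    (NP : Ω → Bool) (NU : Ω → 𝒰) (NXn : Ω → NXt) (NTn : Ω → NTt) (NYn : Ω → NYt)
    (fX : 𝒰 → NXt → 𝒳) (fT : 𝒳 → NTt → Bool) (fY : 𝒳 → Bool → 𝒰 → NYt → Bool)
    (P : Ω → Bool) (hP : P = NP)
    (U : Ω → 𝒰) (hU : U = NU)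
    (X : Ω → 𝒳) (hX : X = fun ω => fX (U ω) (NXn ω))
    (T : Ω → Bool) (hT : T = fun ω => fT (X ω) (NTn ω) && P ω)
    (Y : Ω → Bool) (hY : Y = fun ω => fY (X ω) (T ω) (U ω) (NYn ω))
    (hindep : ∀ (a : Bool) (u : 𝒰) (nx : NXt) (nt : NTt) (ny : NYt),
      Pr pr (fun ω => NP ω = a ∧ NU ω = u ∧ NXn ω = nx ∧ NTn ω = nt ∧ NYn ω = ny)
        = Pr pr (fun ω => NP ω = a) * Pr pr (fun ω => NU ω = u)
          * Pr pr (fun ω => NXn ω = nx) * Pr pr (fun ω => NTn ω = nt)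
          * Pr pr (fun ω => NYn ω = ny))
    (x : 𝒳)
    (hx : 0 < Pr pr (fun ω => X ω = x))
    (hx0 : 0 < Pr pr (fun ω => X ω = x ∧ T ω = false))
    (hx1 : 0 < Pr pr (fun ω => X ω = x ∧ T ω = true)) :
    -- IPE(x)
    cPr pr (fun ω => fY (X ω) (fT (X ω) (NTn ω) && true) (U ω) (NYn ω) = true)
        (fun ω => X ω = x)
      - cPr pr (fun ω => fY (X ω) (fT (X ω) (NTn ω) && false) (U ω) (NYn ω) = true)
          (fun ω => X ω = x)
      = -- ITE(x)
        (cPr pr (fun ω => fY (X ω) true (U ω) (NYn ω) = true) (fun ω => X ω = x)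
          - cPr pr (fun ω => fY (X ω) false (U ω) (NYn ω) = true) (fun ω => X ω = x))
        * -- γ(x)
        cPr pr (fun ω => (fT (X ω) (NTn ω) && true) = true) (fun ω => X ω = x) :=
  stmt5_general pr hsum NP NU NXn NTn NYn fX fT fY U hU X hX hindep x hx
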